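/- (Identification of the conditional local average treatment effect, Lemma 2.) Let T be a measurable space, f : S → T measurable, and V := f ∘ X (a subvector of the covariates). Under unconfoundedness, positivity, and monotonicity, for every measurable set T0 ⊆ T such that P(V ∈ T0 and A1 > A0) > 0, one has E[(m1(X) − m0(X))·1{V ∈ T0}] / E[(ℓ1(X) − ℓ0(X))·1{V ∈ T0}] = E[Y1 − Y0 | A1 > A0, V ∈ T0], where the right-hand side is the conditional expectation of Y1 − Y0 given the event {A1 = 1, A0 = 0} ∩ {V ∈ T0}. -/

import Mathlib

/-!
Write `W_z := (1 - A_z) Y0 + A_z Y1` for the outcome that instrument value `z` would produce, so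
that `Y = W_Z`. For bounded `g`, dividing by the propensity and using the defining identity of
`m1` and unconfoundedness gives
`E[m1(X) g(X)] = E[Z m1(X) g(X)/e(X)] = E[Z Y g(X)/e(X)] = E[Z W_1 g(X)/e(X)] = E[W_1 g(X)]`,
and symmetrically with `1 - Z`, `1 - e` for `m0`; the same computation with `A` in place of `Y`
handles `ℓ_z`. Taking `g = 1{f ∈ T0}`, monotonicity turns `W_1 - W_0 = (A1 - A0)(Y1 - Y0)` and
`A1 - A0` into `1{A1 > A0}(Y1 - Y0)` and `1{A1 > A0}`.

Since `m_z` is only known through moment identities, the divisions above are justified by first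
showing `|m_z(X)| ≤ sup |Y|` almost surely: test the defining identity of `m_z` against
`1{|m_z| > C} m_z / (1 + m_z²)` and then use `e ≥ ε`.
-/

open MeasureTheory ProbabilityTheory
open scoped Classical

lemma abs_div_one_add_sq_le_one (b : ℝ) : |b / (1 + b ^ 2)| ≤ 1 := by
  have hpos : (0 : ℝ) < 1 + b ^ 2 := by positivity
  rw [abs_div, abs_of_pos hpos, div_le_one hpos]
  nlinarith [sq_abs b, abs_nonneg b]

lemma abs_mul_div_one_add_sq_le_one (b : ℝ) : |b * (b / (1 + b ^ 2))| ≤ 1 := by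
  have hpos : (0 : ℝ) < 1 + b ^ 2 := by positivity
  rw [← mul_div_assoc, abs_div, abs_of_pos hpos, div_le_one hpos, abs_mul_self]
  nlinarith

lemma sub_mul_div_one_add_sq_pos {b v C : ℝ} (hv : |v| ≤ C) (hb : C < |b|) :
    0 < (b - v) * (b / (1 + b ^ 2)) := by
  rw [← mul_div_assoc]
  refine div_pos ?_ (by positivity)
  have hvb : v * b ≤ C * |b| := (le_abs_self _).trans
    (by rw [abs_mul]; exact mul_le_mul_of_nonneg_right hv (abs_nonneg b))
  have hbb : |b| * C < |b| * |b| := mul_lt_mul_of_pos_left hb (by linarith [abs_nonneg v])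
  nlinarith [abs_mul_abs_self b]

lemma abs_one_sub_mul_add_mul_le_max {a y₀ y₁ C₀ C₁ : ℝ} (ha : a = 0 ∨ a = 1)
    (h₀ : |y₀| ≤ C₀) (h₁ : |y₁| ≤ C₁) : |(1 - a) * y₀ + a * y₁| ≤ max C₀ C₁ := by
  rcases ha with rfl | rfl
  · simpa using le_max_of_le_left h₀
  · simpa using le_max_of_le_right h₁

lemma one_sub_mul_add_mul_sub_eq_ite {a₀ a₁ : ℝ} (y₀ y₁ : ℝ) (h₀ : a₀ = 0 ∨ a₀ = 1)
    (h₁ : a₁ = 0 ∨ a₁ = 1) (h : a₀ ≤ a₁) :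
    (1 - a₁) * y₀ + a₁ * y₁ - ((1 - a₀) * y₀ + a₀ * y₁) =
      if a₁ = 1 ∧ a₀ = 0 then y₁ - y₀ else 0 := by
  rcases h₀ with rfl | rfl <;> rcases h₁ with rfl | rfl
  · simp
  · simp
  · norm_num at h
  · simp

lemma exists_abs_div_le {α : Type*} {h w : α → ℝ} {B ε : ℝ} (hε : 0 < ε)
    (hwε : ∀ x, ε ≤ w x) (hh : ∀ x, |h x| ≤ B) : ∃ D, ∀ x, |h x / w x| ≤ D :=
  ⟨B / ε, fun x => by
    rw [abs_div]
    exact div_le_div₀ ((abs_nonneg _).trans (hh x)) (hh x) hε ((hwε x).trans (le_abs_self _))⟩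

lemma exists_bounded_measurable_eq_of_abs_le {α : Type*} [MeasurableSpace α] {b : α → ℝ}
    (hb : Measurable b) (C : ℝ) :
    ∃ c : α → ℝ, Measurable c ∧ (∃ D, ∀ x, |c x| ≤ D) ∧ ∀ x, |b x| ≤ C → c x = b x := by
  refine ⟨{x | |b x| ≤ C}.indicator b, hb.indicator (measurableSet_le hb.abs measurable_const),
    ⟨|C|, fun x => ?_⟩, fun x hx => Set.indicator_of_mem (s := {x | |b x| ≤ C}) hx b⟩
  simp only [Set.indicator_apply, Set.mem_ofPred_eq]
  split_ifs with hx
  · exact hx.trans (le_abs_self C)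
  · simp

section

variable {Ω S : Type*} [MeasurableSpace Ω] [MeasurableSpace S] {P : Measure Ω} {X : Ω → S}

lemma integrable_of_abs_le [IsFiniteMeasure P] {f : Ω → ℝ} {C : ℝ} (hf : Measurable f)
    (hC : ∀ ω, |f ω| ≤ C) : Integrable f P :=
  .of_bound hf.aestronglyMeasurable C (ae_of_all _ hC)

lemma MeasureTheory.Integrable.mul_comp_of_abs_le {F : Ω → ℝ} {g : S → ℝ} {C : ℝ}
    (hF : Integrable F P) (hX : Measurable X) (hg : Measurable g) (hgC : ∀ x, |g x| ≤ C) :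
    Integrable (fun ω => F ω * g (X ω)) P :=
  hF.mul_bdd (hg.comp hX).aestronglyMeasurable (ae_of_all _ fun ω => hgC (X ω))

/-- `E[F | X] = E[G | X]`, tested against bounded measurable functions of `X`. -/
def SameCondExp (P : Measure Ω) (X : Ω → S) (F G : Ω → ℝ) : Prop :=
  ∀ g : S → ℝ, Measurable g → (∃ C, ∀ x, |g x| ≤ C) →
    ∫ ω, F ω * g (X ω) ∂P = ∫ ω, G ω * g (X ω) ∂P

namespace SameCondExp

variable {F G F₁ G₁ F₂ G₂ H : Ω → ℝ}

lemma sub (hX : Measurable X) (h₁ : SameCondExp P X F₁ G₁) (h₂ : SameCondExp P X F₂ G₂)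
    (hF₁ : Integrable F₁ P) (hF₂ : Integrable F₂ P) (hG₁ : Integrable G₁ P)
    (hG₂ : Integrable G₂ P) :
    SameCondExp P X (fun ω => F₁ ω - F₂ ω) (fun ω => G₁ ω - G₂ ω) := by
  rintro g hg ⟨C, hC⟩
  simp only [sub_mul]
  rw [integral_sub (hF₁.mul_comp_of_abs_le hX hg hC) (hF₂.mul_comp_of_abs_le hX hg hC),
    integral_sub (hG₁.mul_comp_of_abs_le hX hg hC) (hG₂.mul_comp_of_abs_le hX hg hC),
    h₁ g hg ⟨C, hC⟩, h₂ g hg ⟨C, hC⟩]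

lemma one_sub_mul (hX : Measurable X)
    (h : SameCondExp P X (fun ω => F ω * H ω) (fun ω => G ω * H ω)) (hH : Integrable H P)
    (hFH : Integrable (fun ω => F ω * H ω) P) (hGH : Integrable (fun ω => G ω * H ω) P) :
    SameCondExp P X (fun ω => (1 - F ω) * H ω) (fun ω => (1 - G ω) * H ω) := by
  simpa only [_root_.one_sub_mul] using
    (show SameCondExp P X H H from fun _ _ _ => rfl).sub hX h hH hFH hH hGH

lemma mul_comp_of_abs_le {E : Type*} [MeasurableSpace E] {Q : Ω → E} {ψ : E → ℝ} {C : ℝ}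
    (hU : ∀ ψ : E → ℝ, Measurable ψ → (∃ C, ∀ v, |ψ v| ≤ C) →
      SameCondExp P X (fun ω => F ω * ψ (Q ω)) (fun ω => G ω * ψ (Q ω)))
    (hψ : Measurable ψ) (hψC : ∀ ω, |ψ (Q ω)| ≤ C) :
    SameCondExp P X (fun ω => F ω * ψ (Q ω)) (fun ω => G ω * ψ (Q ω)) := by
  obtain ⟨φ, hφ, hφC, hφψ⟩ := exists_bounded_measurable_eq_of_abs_le hψ C
  simpa only [fun ω => hφψ (Q ω) (hψC ω)] using hU φ hφ hφC

end SameCondExp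

variable {I V : Ω → ℝ} {w b : S → ℝ} {ε C : ℝ}

lemma ae_notMem_preimage_of_sameCondExp [IsFiniteMeasure P] {s : Set S} (hX : Measurable X)
    (hw : Measurable w) (hw0 : ∀ x, 0 < w x) (hw1 : ∀ x, w x ≤ 1)
    (hIw : SameCondExp P X I (fun ω => w (X ω))) (hs : MeasurableSet s)
    (hzero : ∀ᵐ ω ∂P, I ω = 0 ∨ X ω ∉ s) :
    ∀ᵐ ω ∂P, X ω ∉ s := by
  have hind : Measurable (s.indicator (1 : S → ℝ)) := measurable_one.indicator hs
  have hind1 : ∀ x, |s.indicator (1 : S → ℝ) x| ≤ 1 := fun x => by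
    simp only [Set.indicator_apply]
    split_ifs <;> simp
  have hint : ∫ ω, w (X ω) * s.indicator 1 (X ω) ∂P = 0 := by
    rw [← hIw _ hind ⟨1, hind1⟩, integral_eq_zero_of_ae]
    filter_upwards [hzero] with ω hω
    rcases hω with hω | hω <;> simp [hω]
  have hae := (integral_eq_zero_iff_of_nonneg
    (fun ω => mul_nonneg (hw0 (X ω)).le (Set.indicator_nonneg (fun _ _ => zero_le_one) _))
    (integrable_of_abs_le (C := 1) ((hw.comp hX).mul (hind.comp hX)) fun ω => by
      rw [abs_mul]
      exact mul_le_one₀ ((abs_of_pos (hw0 (X ω))).trans_le (hw1 (X ω))) (abs_nonneg _)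
        (hind1 (X ω)))).mp hint
  filter_upwards [hae] with ω hω hmem
  simp [Set.indicator_of_mem hmem, (hw0 (X ω)).ne'] at hω

lemma ae_eq_zero_or_abs_le_of_sameCondExp [IsFiniteMeasure P] (hX : Measurable X)
    (hI : Measurable I) (hI0 : ∀ ω, 0 ≤ I ω) (hI1 : ∀ ω, I ω ≤ 1) (hV : Measurable V)
    (hVC : ∀ ω, |V ω| ≤ C) (hb : Measurable b)
    (hVb : SameCondExp P X (fun ω => V ω * I ω) (fun ω => b (X ω) * I ω)) :
    ∀ᵐ ω ∂P, I ω = 0 ∨ |b (X ω)| ≤ C := by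
  set s := {x | C < |b x|}
  have hs : MeasurableSet s := measurableSet_lt measurable_const hb.abs
  -- `b * g` stays bounded, and `(b - V) * g > 0` wherever `|b| > C ≥ |V|`.
  set g : S → ℝ := s.indicator fun x => b x / (1 + b x ^ 2)
  have hg : Measurable g := (hb.div (measurable_const.add (hb.pow_const 2))).indicator hs
  have hg1 : ∀ x, |g x| ≤ 1 := fun x => by
    simp only [g, Set.indicator_apply]
    split_ifs
    exacts [abs_div_one_add_sq_le_one _, by simp]
  have hbg1 : ∀ x, |b x * g x| ≤ 1 := fun x => by
    simp only [g, Set.indicator_apply]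
    split_ifs
    exacts [abs_mul_div_one_add_sq_le_one _, by simp]
  have hgpos : ∀ ω, C < |b (X ω)| → 0 < (b (X ω) - V ω) * g (X ω) := fun ω hω => by
    simpa only [g, Set.indicator_of_mem (show X ω ∈ s from hω)]
      using sub_mul_div_one_add_sq_pos (hVC ω) hω
  set F : Ω → ℝ := fun ω => b (X ω) * I ω * g (X ω) - V ω * I ω * g (X ω)
  have hF : ∀ ω, F ω = I ω * ((b (X ω) - V ω) * g (X ω)) := fun ω => by ring
  have hF0 : ∀ ω, 0 ≤ F ω := fun ω => by
    rw [hF]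
    refine mul_nonneg (hI0 ω) ?_
    by_cases hω : C < |b (X ω)|
    · exact (hgpos ω hω).le
    · simp [g, Set.indicator_of_notMem (show X ω ∉ s from hω)]
  have hVI : Integrable (fun ω => V ω * I ω) P :=
    integrable_of_abs_le (C := C) (hV.mul hI) fun ω => by
      rw [abs_mul]
      exact (mul_le_mul (hVC ω) ((abs_of_nonneg (hI0 ω)).trans_le (hI1 ω)) (abs_nonneg _)
        ((abs_nonneg _).trans (hVC ω))).trans_eq (mul_one C)
  have hbIg : Integrable (fun ω => b (X ω) * I ω * g (X ω)) P :=
    integrable_of_abs_le (C := 1) ((hb.comp hX).mul hI |>.mul (hg.comp hX)) fun ω => by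
      rw [mul_right_comm, abs_mul]
      exact mul_le_one₀ (hbg1 (X ω)) (abs_nonneg _) ((abs_of_nonneg (hI0 ω)).trans_le (hI1 ω))
  have hFint : ∫ ω, F ω ∂P = 0 := by
    rw [integral_sub hbIg (hVI.mul_comp_of_abs_le hX hg hg1), hVb g hg ⟨1, hg1⟩, sub_self]
  have hFae := (integral_eq_zero_iff_of_nonneg hF0
    (hbIg.sub (hVI.mul_comp_of_abs_le hX hg hg1))).mp hFint
  filter_upwards [hFae] with ω hω
  by_contra! h
  have hFpos : 0 < F ω := by
    rw [hF]
    exact mul_pos ((hI0 ω).lt_of_ne h.1.symm) (hgpos ω h.2)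
  exact hFpos.ne' hω

lemma sameCondExp_of_ae_abs_le (hw : Measurable w) (hε : 0 < ε) (hwε : ∀ x, ε ≤ w x)
    (hb : Measurable b) (hbC : ∀ᵐ ω ∂P, |b (X ω)| ≤ C)
    (hIw : SameCondExp P X I (fun ω => w (X ω)))
    (hIwV : SameCondExp P X (fun ω => I ω * V ω) (fun ω => w (X ω) * V ω))
    (hVb : SameCondExp P X (fun ω => V ω * I ω) (fun ω => b (X ω) * I ω)) :
    SameCondExp P X V (fun ω => b (X ω)) := by
  rintro g hg ⟨D, hD⟩
  -- Replacing `b` by a bounded version `c` keeps the test function `c * g / w` bounded.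
  obtain ⟨c, hc, ⟨Dc, hDc⟩, hcb⟩ := exists_bounded_measurable_eq_of_abs_le hb C
  have hcbX : ∀ᵐ ω ∂P, c (X ω) = b (X ω) := hbC.mono fun ω h => hcb _ h
  have hw0 : ∀ x, w x ≠ 0 := fun x => (hε.trans_le (hwε x)).ne'
  have hgw := exists_abs_div_le hε hwε hD
  have hcgw := exists_abs_div_le (h := fun x => c x * g x) hε hwε fun x => by
    rw [abs_mul]
    exact mul_le_mul (hDc x) (hD x) (abs_nonneg _) ((abs_nonneg _).trans (hDc x))
  calc ∫ ω, V ω * g (X ω) ∂P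
      = ∫ ω, w (X ω) * V ω * (g (X ω) / w (X ω)) ∂P := by
        congr 1 with ω
        field_simp [hw0 (X ω)]
    _ = ∫ ω, I ω * V ω * (g (X ω) / w (X ω)) ∂P :=
        (hIwV (fun x => g x / w x) (hg.div hw) hgw).symm
    _ = ∫ ω, b (X ω) * I ω * (g (X ω) / w (X ω)) ∂P := by
        simp only [mul_comm (I _)]
        exact hVb (fun x => g x / w x) (hg.div hw) hgw
    _ = ∫ ω, I ω * (c (X ω) * g (X ω) / w (X ω)) ∂P :=
        integral_congr_ae <| hcbX.mono fun ω h => by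
          simp only [h]
          ring
    _ = ∫ ω, w (X ω) * (c (X ω) * g (X ω) / w (X ω)) ∂P :=
        hIw (fun x => c x * g x / w x) ((hc.mul hg).div hw) hcgw
    _ = ∫ ω, b (X ω) * g (X ω) ∂P :=
        integral_congr_ae <| hcbX.mono fun ω h => by
          simp only [h]
          field_simp [hw0 (X ω)]

lemma sameCondExp_of_regression [IsFiniteMeasure P] (hX : Measurable X) (hI : Measurable I)
    (hI0 : ∀ ω, 0 ≤ I ω) (hI1 : ∀ ω, I ω ≤ 1) (hw : Measurable w) (hε : 0 < ε)
    (hwε : ∀ x, ε ≤ w x) (hw1 : ∀ x, w x ≤ 1) (hV : Measurable V) (hVC : ∀ ω, |V ω| ≤ C)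
    (hb : Measurable b) (hIw : SameCondExp P X I (fun ω => w (X ω)))
    (hIwV : SameCondExp P X (fun ω => I ω * V ω) (fun ω => w (X ω) * V ω))
    (hVb : SameCondExp P X (fun ω => V ω * I ω) (fun ω => b (X ω) * I ω)) :
    Integrable (fun ω => b (X ω)) P ∧ SameCondExp P X V (fun ω => b (X ω)) := by
  have hbC : ∀ᵐ ω ∂P, |b (X ω)| ≤ C := by
    have hI_or := ae_eq_zero_or_abs_le_of_sameCondExp hX hI hI0 hI1 hV hVC hb hVb
    refine (ae_notMem_preimage_of_sameCondExp hX hw (fun x => hε.trans_le (hwε x)) hw1 hIw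
      (measurableSet_lt measurable_const hb.abs) ?_).mono fun ω h => not_lt.mp h
    exact hI_or.mono fun ω h => h.imp_right not_lt.mpr
  exact ⟨.of_bound (hb.comp hX).aestronglyMeasurable C hbC,
    sameCondExp_of_ae_abs_le hw hε hwε hb hbC hIw hIwV hVb⟩

theorem sameCondExp_sub_of_unconfounded [IsFiniteMeasure P] {E : Type*} [MeasurableSpace E]
    {Q : Ω → E} {Z W : Ω → ℝ} {e b₀ b₁ : S → ℝ} {ψ₀ ψ₁ : E → ℝ}
    (hX : Measurable X) (hQ : Measurable Q) (hZ : Measurable Z)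
    (hZ01 : ∀ ω, Z ω = 0 ∨ Z ω = 1) (he : Measurable e) (hε : 0 < ε)
    (hebd : ∀ x, ε ≤ e x ∧ e x ≤ 1 - ε)
    (hU : ∀ ψ : E → ℝ, Measurable ψ → (∃ C, ∀ v, |ψ v| ≤ C) →
      SameCondExp P X (fun ω => Z ω * ψ (Q ω)) (fun ω => e (X ω) * ψ (Q ω)))
    (hψ₀ : Measurable ψ₀) (hψ₁ : Measurable ψ₁) (hψ₀C : ∀ ω, |ψ₀ (Q ω)| ≤ C)
    (hψ₁C : ∀ ω, |ψ₁ (Q ω)| ≤ C) (hW : ∀ ω, W ω = (1 - Z ω) * ψ₀ (Q ω) + Z ω * ψ₁ (Q ω))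
    (hb₀ : Measurable b₀) (hb₁ : Measurable b₁)
    (hb₀v : SameCondExp P X (fun ω => W ω * if Z ω = 0 then 1 else 0)
      (fun ω => b₀ (X ω) * if Z ω = 0 then 1 else 0))
    (hb₁v : SameCondExp P X (fun ω => W ω * if Z ω = 1 then 1 else 0)
      (fun ω => b₁ (X ω) * if Z ω = 1 then 1 else 0)) :
    SameCondExp P X (fun ω => ψ₁ (Q ω) - ψ₀ (Q ω)) (fun ω => b₁ (X ω) - b₀ (X ω)) := by
  have hZI : ∀ ω, 0 ≤ Z ω ∧ Z ω ≤ 1 := fun ω => by rcases hZ01 ω with h | h <;> simp [h]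
  have heabs : ∀ x, |e x| ≤ 1 := fun x => abs_le.mpr ⟨by linarith [hebd x], by linarith [hebd x]⟩
  have hψQ : ∀ {ψ : E → ℝ} {D : ℝ}, Measurable ψ → (∀ ω, |ψ (Q ω)| ≤ D) →
      Integrable (fun ω => ψ (Q ω)) P := fun hψ hD => integrable_of_abs_le (hψ.comp hQ) hD
  have hU₁ : ∀ ψ : E → ℝ, Measurable ψ → ∀ D, (∀ ω, |ψ (Q ω)| ≤ D) →
      SameCondExp P X (fun ω => Z ω * ψ (Q ω)) (fun ω => e (X ω) * ψ (Q ω)) :=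
    fun ψ hψ D hD => SameCondExp.mul_comp_of_abs_le hU hψ hD
  have hU₀ : ∀ ψ : E → ℝ, Measurable ψ → ∀ D, (∀ ω, |ψ (Q ω)| ≤ D) →
      SameCondExp P X (fun ω => (1 - Z ω) * ψ (Q ω)) (fun ω => (1 - e (X ω)) * ψ (Q ω)) :=
    fun ψ hψ D hD => (hU₁ ψ hψ D hD).one_sub_mul hX (hψQ hψ hD)
      ((hψQ hψ hD).bdd_mul hZ.aestronglyMeasurable
        (ae_of_all _ fun ω => abs_le.mpr ⟨by linarith [hZI ω], (hZI ω).2⟩))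
      ((hψQ hψ hD).bdd_mul (he.comp hX).aestronglyMeasurable
        (ae_of_all _ fun ω => heabs (X ω)))
  have hZe : SameCondExp P X Z (fun ω => e (X ω)) := by
    simpa only [mul_one] using hU₁ (fun _ => 1) measurable_const 1 (by simp)
  have hZe₀ : SameCondExp P X (fun ω => 1 - Z ω) (fun ω => 1 - e (X ω)) := by
    simpa only [mul_one] using hU₀ (fun _ => 1) measurable_const 1 (by simp)
  have hind₁ : ∀ ω, (if Z ω = 1 then (1 : ℝ) else 0) = Z ω := fun ω => by
    rcases hZ01 ω with h | h <;> simp [h]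
  have hind₀ : ∀ ω, (if Z ω = 0 then (1 : ℝ) else 0) = 1 - Z ω := fun ω => by
    rcases hZ01 ω with h | h <;> simp [h]
  have hWZ₁ : ∀ ω, W ω * Z ω = ψ₁ (Q ω) * Z ω := fun ω => by
    rcases hZ01 ω with h | h <;> simp [hW, h]
  have hWZ₀ : ∀ ω, W ω * (1 - Z ω) = ψ₀ (Q ω) * (1 - Z ω) := fun ω => by
    rcases hZ01 ω with h | h <;> simp [hW, h]
  simp only [hind₁, hWZ₁] at hb₁v
  simp only [hind₀, hWZ₀] at hb₀v
  obtain ⟨hb₁i, hb₁⟩ := sameCondExp_of_regression hX hZ (fun ω => (hZI ω).1)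
    (fun ω => (hZI ω).2) he hε (fun x => (hebd x).1) (fun x => by linarith [hebd x])
    (hψ₁.comp hQ) hψ₁C hb₁ hZe (hU₁ ψ₁ hψ₁ C hψ₁C) hb₁v
  obtain ⟨hb₀i, hb₀⟩ := sameCondExp_of_regression (I := fun ω => 1 - Z ω)
    (w := fun x => 1 - e x) hX (measurable_const.sub hZ) (fun ω => by linarith [hZI ω])
    (fun ω => by linarith [hZI ω])
    (measurable_const.sub he) hε (fun x => by linarith [hebd x]) (fun x => by linarith [hebd x])
    (hψ₀.comp hQ) hψ₀C hb₀ hZe₀ (hU₀ ψ₀ hψ₀ C hψ₀C) hb₀v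
  exact hb₁.sub hX hb₀ (hψQ hψ₁ hψ₁C) (hψQ hψ₀ hψ₀C) hb₁i hb₀i

lemma integral_sub_mul_ite_eq_setIntegral {A₀ A₁ U₀ U₁ : Ω → ℝ} {p : Ω → Prop}
    (hA₀ : ∀ ω, A₀ ω = 0 ∨ A₀ ω = 1) (hA₁ : ∀ ω, A₁ ω = 0 ∨ A₁ ω = 1)
    (hmono : ∀ᵐ ω ∂P, A₀ ω ≤ A₁ ω)
    (hE : MeasurableSet ({ω | A₁ ω = 1 ∧ A₀ ω = 0} ∩ {ω | p ω})) :
    ∫ ω, ((1 - A₁ ω) * U₀ ω + A₁ ω * U₁ ω - ((1 - A₀ ω) * U₀ ω + A₀ ω * U₁ ω)) *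
        (if p ω then 1 else 0) ∂P =
      ∫ ω in {ω | A₁ ω = 1 ∧ A₀ ω = 0} ∩ {ω | p ω}, (U₁ ω - U₀ ω) ∂P := by
  rw [← integral_indicator hE]
  refine integral_congr_ae (hmono.mono fun ω h => ?_)
  dsimp only
  rw [one_sub_mul_add_mul_sub_eq_ite _ _ (hA₀ ω) (hA₁ ω) h]
  simp only [Set.indicator_apply, Set.mem_inter_iff, Set.mem_ofPred_eq]
  split_ifs <;> simp_all

end

theorem stmt_6_general
    {Ω : Type*} [MeasurableSpace Ω] (P : Measure Ω) [IsProbabilityMeasure P]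
    {S : Type*} [mS : MeasurableSpace S]
    {T : Type*} [mT : MeasurableSpace T]
    (X : Ω → S) (hX : Measurable X)
    (f : S → T) (hf : Measurable f)
    (Z A0 A1 Y0 Y1 : Ω → ℝ)
    (hZ : Measurable Z) (hA0 : Measurable A0) (hA1 : Measurable A1)
    (hY0 : Measurable Y0) (hY1 : Measurable Y1)
    (hZ01 : ∀ ω, Z ω = 0 ∨ Z ω = 1)
    (hA0_01 : ∀ ω, A0 ω = 0 ∨ A0 ω = 1)
    (hA1_01 : ∀ ω, A1 ω = 0 ∨ A1 ω = 1)
    (hY0b : ∃ C, ∀ ω, |Y0 ω| ≤ C) (hY1b : ∃ C, ∀ ω, |Y1 ω| ≤ C)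
    (A Y : Ω → ℝ)
    (hA : A = fun ω => (1 - Z ω) * A0 ω + Z ω * A1 ω)
    (hY : Y = fun ω => (1 - A ω) * Y0 ω + A ω * Y1 ω)
    (e : S → ℝ) (he : Measurable e) (ε : ℝ) (hε : 0 < ε)
    (hebd : ∀ x, ε ≤ e x ∧ e x ≤ 1 - ε)
    (hUnconf : ∀ ψ : ℝ × ℝ × ℝ × ℝ → ℝ, Measurable ψ → (∃ C, ∀ v, |ψ v| ≤ C) →
      ∀ g : S → ℝ, Measurable g → (∃ C, ∀ x, |g x| ≤ C) →
      ∫ ω, Z ω * ψ (A0 ω, A1 ω, Y0 ω, Y1 ω) * g (X ω) ∂P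
        = ∫ ω, e (X ω) * ψ (A0 ω, A1 ω, Y0 ω, Y1 ω) * g (X ω) ∂P)
    (m0 m1 l0 l1 : S → ℝ)
    (hm0 : Measurable m0) (hm1 : Measurable m1)
    (hl0 : Measurable l0) (hl1 : Measurable l1)
    (hm0v : ∀ g : S → ℝ, Measurable g → (∃ C, ∀ x, |g x| ≤ C) →
      ∫ ω, Y ω * (if Z ω = 0 then (1:ℝ) else 0) * g (X ω) ∂P
        = ∫ ω, m0 (X ω) * (if Z ω = 0 then (1:ℝ) else 0) * g (X ω) ∂P)
    (hm1v : ∀ g : S → ℝ, Measurable g → (∃ C, ∀ x, |g x| ≤ C) →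
      ∫ ω, Y ω * (if Z ω = 1 then (1:ℝ) else 0) * g (X ω) ∂P
        = ∫ ω, m1 (X ω) * (if Z ω = 1 then (1:ℝ) else 0) * g (X ω) ∂P)
    (hl0v : ∀ g : S → ℝ, Measurable g → (∃ C, ∀ x, |g x| ≤ C) →
      ∫ ω, A ω * (if Z ω = 0 then (1:ℝ) else 0) * g (X ω) ∂P
        = ∫ ω, l0 (X ω) * (if Z ω = 0 then (1:ℝ) else 0) * g (X ω) ∂P)
    (hl1v : ∀ g : S → ℝ, Measurable g → (∃ C, ∀ x, |g x| ≤ C) →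
      ∫ ω, A ω * (if Z ω = 1 then (1:ℝ) else 0) * g (X ω) ∂P
        = ∫ ω, l1 (X ω) * (if Z ω = 1 then (1:ℝ) else 0) * g (X ω) ∂P)
    (hMono : P {ω | A0 ω ≤ A1 ω} = 1) :
    ∀ T0 : Set T, MeasurableSet T0 →
      0 < P ({ω | A1 ω = 1 ∧ A0 ω = 0} ∩ {ω | f (X ω) ∈ T0}) →
      (∫ ω, (m1 (X ω) - m0 (X ω)) * (if f (X ω) ∈ T0 then (1:ℝ) else 0) ∂P)
        / (∫ ω, (l1 (X ω) - l0 (X ω)) * (if f (X ω) ∈ T0 then (1:ℝ) else 0) ∂P)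
      = (∫ ω in {ω | A1 ω = 1 ∧ A0 ω = 0} ∩ {ω | f (X ω) ∈ T0}, (Y1 ω - Y0 ω) ∂P)
        / (P ({ω | A1 ω = 1 ∧ A0 ω = 0} ∩ {ω | f (X ω) ∈ T0})).toReal := by
  intro T0 hT0 _
  obtain ⟨C₀, hY0C⟩ := hY0b
  obtain ⟨C₁, hY1C⟩ := hY1b
  have hQ : Measurable fun ω => (A0 ω, A1 ω, Y0 ω, Y1 ω) := by fun_prop
  have hmono : ∀ᵐ ω ∂P, A0 ω ≤ A1 ω :=
    (ae_iff_prob_eq_one (measurableSet_setOfPred.mp (measurableSet_le hA0 hA1))).mpr hMono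
  have hE : MeasurableSet ({ω | A1 ω = 1 ∧ A0 ω = 0} ∩ {ω | f (X ω) ∈ T0}) :=
    ((measurableSet_eq_fun hA1 measurable_const).inter
      (measurableSet_eq_fun hA0 measurable_const)).inter (hX (hf hT0))
  have hG : Measurable fun x => if f x ∈ T0 then (1 : ℝ) else 0 :=
    Measurable.ite (hf hT0) measurable_const measurable_const
  have hG1 : ∃ C, ∀ x, |if f x ∈ T0 then (1 : ℝ) else 0| ≤ C :=
    ⟨1, fun x => by split_ifs <;> simp⟩
  have hnum := sameCondExp_sub_of_unconfounded (W := Y)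
    (ψ₀ := fun v => (1 - v.1) * v.2.2.1 + v.1 * v.2.2.2)
    (ψ₁ := fun v => (1 - v.2.1) * v.2.2.1 + v.2.1 * v.2.2.2) hX hQ hZ hZ01 he hε hebd hUnconf
    (by fun_prop) (by fun_prop)
    (fun ω => abs_one_sub_mul_add_mul_le_max (hA0_01 ω) (hY0C ω) (hY1C ω))
    (fun ω => abs_one_sub_mul_add_mul_le_max (hA1_01 ω) (hY0C ω) (hY1C ω))
    (fun ω => by subst hY hA; ring) hm0 hm1 hm0v hm1v _ hG hG1
  -- `A` is the observed outcome attached to the potential outcomes `0` and `1`.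
  have hden := sameCondExp_sub_of_unconfounded (W := A)
    (ψ₀ := fun v => (1 - v.1) * 0 + v.1 * 1) (ψ₁ := fun v => (1 - v.2.1) * 0 + v.2.1 * 1)
    hX hQ hZ hZ01 he hε hebd hUnconf (by fun_prop) (by fun_prop)
    (fun ω => abs_one_sub_mul_add_mul_le_max (hA0_01 ω) abs_zero.le abs_one.le)
    (fun ω => abs_one_sub_mul_add_mul_le_max (hA1_01 ω) abs_zero.le abs_one.le)
    (fun ω => by subst hA; ring) hl0 hl1 hl0v hl1v _ hG hG1
  beta_reduce at hnum hden
  rw [← hnum, ← hden, integral_sub_mul_ite_eq_setIntegral hA0_01 hA1_01 hmono hE,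
    integral_sub_mul_ite_eq_setIntegral hA0_01 hA1_01 hmono hE]
  simp [measureReal_def]

/-- Lemma 2, identification of the conditional LATE: for V := f ∘ X and any
measurable T0 with P(V ∈ T0, A1 > A0) > 0,
E[(m1(X)−m0(X))·1{V∈T0}] / E[(ℓ1(X)−ℓ0(X))·1{V∈T0}] = E[Y1 − Y0 | A1 > A0, V ∈ T0]. -/
theorem stmt_6
    {Ω : Type*} [MeasurableSpace Ω] (P : Measure Ω) [IsProbabilityMeasure P]
    {S : Type*} [mS : MeasurableSpace S]
    {T : Type*} [mT : MeasurableSpace T]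
    (X : Ω → S) (hX : Measurable X)
    (f : S → T) (hf : Measurable f)
    (Z A0 A1 Y0 Y1 : Ω → ℝ)
    (hZ : Measurable Z) (hA0 : Measurable A0) (hA1 : Measurable A1)
    (hY0 : Measurable Y0) (hY1 : Measurable Y1)
    (hZ01 : ∀ ω, Z ω = 0 ∨ Z ω = 1)
    (hA0_01 : ∀ ω, A0 ω = 0 ∨ A0 ω = 1)
    (hA1_01 : ∀ ω, A1 ω = 0 ∨ A1 ω = 1)
    (hY0b : ∃ C, ∀ ω, |Y0 ω| ≤ C) (hY1b : ∃ C, ∀ ω, |Y1 ω| ≤ C)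
    (A Y : Ω → ℝ)
    (hA : A = fun ω => (1 - Z ω) * A0 ω + Z ω * A1 ω)
    (hY : Y = fun ω => (1 - A ω) * Y0 ω + A ω * Y1 ω)
    (e : S → ℝ) (he : Measurable e) (ε : ℝ) (hε : 0 < ε) (hε2 : ε < 1/2)
    (hebd : ∀ x, ε ≤ e x ∧ e x ≤ 1 - ε)
    (hVe : ∀ g : S → ℝ, Measurable g → (∃ C, ∀ x, |g x| ≤ C) →
      ∫ ω, Z ω * g (X ω) ∂P = ∫ ω, e (X ω) * g (X ω) ∂P)
    (hUnconf : ∀ ψ : ℝ × ℝ × ℝ × ℝ → ℝ, Measurable ψ → (∃ C, ∀ v, |ψ v| ≤ C) →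
      ∀ g : S → ℝ, Measurable g → (∃ C, ∀ x, |g x| ≤ C) →
      ∫ ω, Z ω * ψ (A0 ω, A1 ω, Y0 ω, Y1 ω) * g (X ω) ∂P
        = ∫ ω, e (X ω) * ψ (A0 ω, A1 ω, Y0 ω, Y1 ω) * g (X ω) ∂P)
    (m0 m1 l0 l1 : S → ℝ)
    (hm0 : Measurable m0) (hm1 : Measurable m1)
    (hl0 : Measurable l0) (hl1 : Measurable l1)
    (hm0v : ∀ g : S → ℝ, Measurable g → (∃ C, ∀ x, |g x| ≤ C) →
      ∫ ω, Y ω * (if Z ω = 0 then (1:ℝ) else 0) * g (X ω) ∂P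
        = ∫ ω, m0 (X ω) * (if Z ω = 0 then (1:ℝ) else 0) * g (X ω) ∂P)
    (hm1v : ∀ g : S → ℝ, Measurable g → (∃ C, ∀ x, |g x| ≤ C) →
      ∫ ω, Y ω * (if Z ω = 1 then (1:ℝ) else 0) * g (X ω) ∂P
        = ∫ ω, m1 (X ω) * (if Z ω = 1 then (1:ℝ) else 0) * g (X ω) ∂P)
    (hl0v : ∀ g : S → ℝ, Measurable g → (∃ C, ∀ x, |g x| ≤ C) →
      ∫ ω, A ω * (if Z ω = 0 then (1:ℝ) else 0) * g (X ω) ∂P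
        = ∫ ω, l0 (X ω) * (if Z ω = 0 then (1:ℝ) else 0) * g (X ω) ∂P)
    (hl1v : ∀ g : S → ℝ, Measurable g → (∃ C, ∀ x, |g x| ≤ C) →
      ∫ ω, A ω * (if Z ω = 1 then (1:ℝ) else 0) * g (X ω) ∂P
        = ∫ ω, l1 (X ω) * (if Z ω = 1 then (1:ℝ) else 0) * g (X ω) ∂P)
    (hMono : P {ω | A0 ω ≤ A1 ω} = 1) :
    ∀ T0 : Set T, MeasurableSet T0 →
      0 < P ({ω | A1 ω = 1 ∧ A0 ω = 0} ∩ {ω | f (X ω) ∈ T0}) →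
      (∫ ω, (m1 (X ω) - m0 (X ω)) * (if f (X ω) ∈ T0 then (1:ℝ) else 0) ∂P)
        / (∫ ω, (l1 (X ω) - l0 (X ω)) * (if f (X ω) ∈ T0 then (1:ℝ) else 0) ∂P)
      = (∫ ω in {ω | A1 ω = 1 ∧ A0 ω = 0} ∩ {ω | f (X ω) ∈ T0}, (Y1 ω - Y0 ω) ∂P)
        / (P ({ω | A1 ω = 1 ∧ A0 ω = 0} ∩ {ω | f (X ω) ∈ T0})).toReal :=
  stmt_6_general P (mS := mS) (mT := mT) X hX f hf Z A0 A1 Y0 Y1 hZ hA0 hA1 hY0 hY1 hZ01 hA0_01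
    hA1_01 hY0b hY1b A Y hA hY e he ε hε hebd hUnconf m0 m1 l0 l1 hm0 hm1 hl0 hl1 hm0v hm1v hl0v
    hl1v hMono
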